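/- Partially mapped crossover (PMX) validity: given two permutations σ, τ of {1,…,n} and a segment [a,b] ⊆ {1,…,n}, the PMX offspring—which copies τ's values on [a,b] and fills the remaining positions with σ's values, replacing any value that already appears in the copied segment by repeatedly applying the mapping σ(i) ↦ τ(i) for i ∈ [a,b] until a value outside τ([a,b]) is obtained—is again a permutation of {1,…,n}. -/
import Mathlib


/-- The repair mapping of PMX induced by the matched segment: sends `τ(i) ↦ σ(i)`,
i.e. `v ↦ σ(τ⁻¹(v))`. -/
def pmxMap (n : ℕ) (σ τ : Equiv.Perm (Fin n)) : Fin n → Fin n :=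
  fun v => σ (τ.symm v)

/-- PMX validity: for permutations `σ, τ` and a segment `[a,b]`, the repair iteration
terminates for every position outside the segment, and the PMX offspring—copying `τ` on
`[a,b]` and filling position `i` outside the segment with the first iterate of the repair
map applied to `σ(i)` that lies outside `τ([a,b])`—is again a permutation. -/
theorem pmx_offspring_is_permutation (n : ℕ) (σ τ : Equiv.Perm (Fin n)) (a b : Fin n) :
    ∃ h : ∀ i : Fin n, i ∉ Finset.Icc a b →
        ∃ k, (pmxMap n σ τ)^[k] (σ i) ∉ (Finset.Icc a b).image τ,
      Function.Bijective (fun i : Fin n =>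
        if hi : i ∈ Finset.Icc a b then τ i
        else (pmxMap n σ τ)^[Nat.find (h i hi)] (σ i)) := by
  set S := (Finset.Icc a b).image τ with hS
  set e : Equiv.Perm (Fin n) := σ * τ⁻¹ with he
  have hmemS : ∀ i : Fin n, τ i ∈ S ↔ i ∈ Finset.Icc a b := by
    intro i
    simp [hS, Finset.mem_image, τ.injective.eq_iff]
  have hsymm : ∀ v, e.symm (σ v) = τ v := by
    intro v
    rw [Equiv.symm_apply_eq]
    simp [he, Equiv.Perm.mul_apply]
  have hkey : ∀ (i j : Fin n) (d : ℕ), 0 < d → (pmxMap n σ τ)^[d] (σ j) = σ i →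
      (pmxMap n σ τ)^[d-1] (σ j) ∈ S → i ∈ Finset.Icc a b := by
    intro i j d hd heq hmem
    have heq' : (⇑e)^[d] (σ j) = σ i := heq
    have hmem' : (⇑e)^[d-1] (σ j) ∈ S := hmem
    have h1 : e ((⇑e)^[d-1] (σ j)) = σ i := by
      rw [← Function.iterate_succ_apply' (⇑e) (d-1) (σ j), Nat.succ_eq_add_one,
        Nat.sub_add_cancel hd]
      exact heq'
    have h2 : (⇑e)^[d-1] (σ j) = e.symm (σ i) := by
      rw [← h1]; simp
    rw [h2, hsymm] at hmem'
    exact (hmemS i).mp hmem'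
  have hiterpow : ∀ (k : ℕ) (v : Fin n), (⇑e)^[k] v = (e ^ k) v := by
    intro k v
    induction k with
    | zero => simp
    | succ k ih =>
      rw [Function.iterate_succ_apply', ih, pow_succ', Equiv.Perm.mul_apply]
      rfl
  have h : ∀ i : Fin n, i ∉ Finset.Icc a b →
      ∃ k, (pmxMap n σ τ)^[k] (σ i) ∉ S := by
    intro i hi
    by_contra hc
    push_neg at hc
    have hm : 0 < orderOf e := orderOf_pos e
    have hper : (pmxMap n σ τ)^[orderOf e] (σ i) = σ i := by
      show (⇑e)^[orderOf e] (σ i) = σ i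
      rw [hiterpow, pow_orderOf_eq_one]; simp
    exact hi (hkey i i (orderOf e) hm hper (hc _))
  refine ⟨h, ?_⟩
  rw [← Finite.injective_iff_bijective]
  have main : ∀ (i j : Fin n) (hi : i ∉ Finset.Icc a b) (hj : j ∉ Finset.Icc a b),
      Nat.find (h i hi) ≤ Nat.find (h j hj) →
      (pmxMap n σ τ)^[Nat.find (h i hi)] (σ i) =
        (pmxMap n σ τ)^[Nat.find (h j hj)] (σ j) → i = j := by
    intro i j hi hj hle heq
    set ki := Nat.find (h i hi) with hki
    set kj := Nat.find (h j hj) with hkj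
    set d := kj - ki with hd
    have hkd : kj = ki + d := by omega
    have heq2 : σ i = (pmxMap n σ τ)^[d] (σ j) := by
      have h3 : (⇑e)^[ki] (σ i) = (⇑e)^[ki] ((⇑e)^[d] (σ j)) := by
        rw [← Function.iterate_add_apply, ← hkd]
        exact heq
      exact (Function.Injective.iterate e.injective ki) h3
    rcases Nat.eq_zero_or_pos d with h0 | hpos
    · rw [h0] at heq2
      exact σ.injective heq2
    · exfalso
      have hdlt : d - 1 < kj := by omega
      have hmem : (pmxMap n σ τ)^[d-1] (σ j) ∈ S := by
        have := Nat.find_min (h j hj) hdlt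
        simpa using this
      exact hi (hkey i j d hpos heq2.symm hmem)
  intro i j hij
  simp only at hij
  by_cases hi : i ∈ Finset.Icc a b <;> by_cases hj : j ∈ Finset.Icc a b
  · rw [dif_pos hi, dif_pos hj] at hij
    exact τ.injective hij
  · rw [dif_pos hi, dif_neg hj] at hij
    exact absurd ((hmemS i).mpr hi) (hij ▸ Nat.find_spec (h j hj))
  · rw [dif_neg hi, dif_pos hj] at hij
    exact absurd ((hmemS j).mpr hj) (hij.symm ▸ Nat.find_spec (h i hi))
  · rw [dif_neg hi, dif_neg hj] at hij
    rcases le_total (Nat.find (h i hi)) (Nat.find (h j hj)) with hle | hle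
    · exact main i j hi hj hle hij
    · exact (main j i hj hi hle hij.symm).symm
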